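/- Fix 0 ≤ a < 1 and define curves α(t) = cos(t)·(1,0) + sin(t)·(ia, √(1-a²)) and β(t) = (cos(2t)/√2)·(0,1) + (sin(2t)/√2)·(√(1-a²), ia) in C^2, and set F(t,s) = cos(s)·α(t) + sin(s)·β(t). Then F_t · F_t = cos²s + 2sin²s − 2√(2(1−a²)) cos(s) sin(s) sin(3t) and F_s · F_s = (F_t · F_t)/2, where · denotes the real inner product on C^2 ≅ R^4. -/

import Mathlib

open Real Complex

/-- The Hermitian inner product on `ℂ² ≅ ℝ⁴`; its real part is the Euclidean
inner product. -/
noncomputable def hermC2 (u v : ℂ × ℂ) : ℂ :=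
  starRingEnd ℂ u.1 * v.1 + starRingEnd ℂ u.2 * v.2

/-- The curve `α(t) = cos t · (1,0) + sin t · (ia, √(1-a²))` in `ℂ²`. -/
noncomputable def alphaA (a t : ℝ) : ℂ × ℂ :=
  ((Real.cos t : ℂ) + (Real.sin t : ℂ) * ((a : ℂ) * Complex.I),
   (Real.sin t : ℂ) * (Real.sqrt (1 - a ^ 2) : ℂ))

/-- The curve `β(t) = (cos 2t/√2) · (0,1) + (sin 2t/√2) · (√(1-a²), ia)` in `ℂ²`. -/
noncomputable def betaA (a t : ℝ) : ℂ × ℂ :=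
  ((Real.sin (2 * t) / Real.sqrt 2 : ℝ) * (Real.sqrt (1 - a ^ 2) : ℂ),
   ((Real.cos (2 * t) / Real.sqrt 2 : ℝ) : ℂ)
     + ((Real.sin (2 * t) / Real.sqrt 2 : ℝ) : ℂ) * ((a : ℂ) * Complex.I))

/-- The isotropic Möbius-band surface `F(t,s) = cos s · α(t) + sin s · β(t)`. -/
noncomputable def FA (a t s : ℝ) : ℂ × ℂ :=
  Real.cos s • alphaA a t + Real.sin s • betaA a t

/-- Partial derivative of `FA` in `t`. -/
noncomputable def FAt (a t s : ℝ) : ℂ × ℂ := deriv (fun t' => FA a t' s) t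

/-- Partial derivative of `FA` in `s`. -/
noncomputable def FAs (a t s : ℝ) : ℂ × ℂ := deriv (fun s' => FA a t s') s

lemma hasDerivAt_alphaA (a t : ℝ) :
    HasDerivAt (fun t' => alphaA a t')
      (((-Real.sin t : ℝ) : ℂ) + ((Real.cos t : ℝ) : ℂ) * ((a : ℂ) * Complex.I),
       ((Real.cos t : ℝ) : ℂ) * ((Real.sqrt (1 - a ^ 2) : ℝ) : ℂ)) t := by
  unfold alphaA
  exact (((Real.hasDerivAt_cos t).ofReal_comp).add
      (((Real.hasDerivAt_sin t).ofReal_comp).mul_const _)).prodMk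
    (((Real.hasDerivAt_sin t).ofReal_comp).mul_const _)

lemma hasDerivAt_betaA (a t : ℝ) :
    HasDerivAt (fun t' => betaA a t')
      (((Real.cos (2 * t) * 2 / Real.sqrt 2 : ℝ) : ℂ) * ((Real.sqrt (1 - a ^ 2) : ℝ) : ℂ),
       ((-Real.sin (2 * t) * 2 / Real.sqrt 2 : ℝ) : ℂ)
         + ((Real.cos (2 * t) * 2 / Real.sqrt 2 : ℝ) : ℂ) * ((a : ℂ) * Complex.I)) t := by
  have h2 : HasDerivAt (fun t' : ℝ => 2 * t') 2 t := by
    simpa using (hasDerivAt_id t).const_mul (2 : ℝ)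
  have hsin2 : HasDerivAt (fun t' => Real.sin (2 * t')) (Real.cos (2 * t) * 2) t :=
    (Real.hasDerivAt_sin (2 * t)).comp t h2
  have hcos2 : HasDerivAt (fun t' => Real.cos (2 * t')) (-Real.sin (2 * t) * 2) t :=
    (Real.hasDerivAt_cos (2 * t)).comp t h2
  unfold betaA
  exact (((hsin2.div_const _).ofReal_comp).mul_const _).prodMk
    ((((hcos2.div_const _).ofReal_comp)).add
      (((hsin2.div_const _).ofReal_comp).mul_const _))

/-- For `0 ≤ a < 1`:
`F_t · F_t = cos²s + 2 sin²s − 2√(2(1−a²)) cos s sin s sin 3t` and `F_s · F_s = (F_t·F_t)/2`. -/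
theorem FA_metric (a : ℝ) (ha0 : 0 ≤ a) (ha1 : a < 1) (t s : ℝ) :
    (hermC2 (FAt a t s) (FAt a t s)).re
        = Real.cos s ^ 2 + 2 * Real.sin s ^ 2
          - 2 * Real.sqrt (2 * (1 - a ^ 2)) * Real.cos s * Real.sin s * Real.sin (3 * t) ∧
    (hermC2 (FAs a t s) (FAs a t s)).re
        = (hermC2 (FAt a t s) (FAt a t s)).re / 2 := by
  have ht : HasDerivAt (fun t' => FA a t' s)
      (Real.cos s • (((-Real.sin t : ℝ) : ℂ) + ((Real.cos t : ℝ) : ℂ) * ((a : ℂ) * Complex.I),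
         ((Real.cos t : ℝ) : ℂ) * ((Real.sqrt (1 - a ^ 2) : ℝ) : ℂ))
       + Real.sin s • (((Real.cos (2 * t) * 2 / Real.sqrt 2 : ℝ) : ℂ)
            * ((Real.sqrt (1 - a ^ 2) : ℝ) : ℂ),
          ((-Real.sin (2 * t) * 2 / Real.sqrt 2 : ℝ) : ℂ)
            + ((Real.cos (2 * t) * 2 / Real.sqrt 2 : ℝ) : ℂ) * ((a : ℂ) * Complex.I))) t := by
    unfold FA
    exact ((hasDerivAt_alphaA a t).const_smul (Real.cos s)).add ((hasDerivAt_betaA a t).const_smul (Real.sin s))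
  have hs : HasDerivAt (fun s' => FA a t s')
      ((-Real.sin s) • alphaA a t + Real.cos s • betaA a t) s := by
    unfold FA
    exact ((Real.hasDerivAt_cos s).smul_const _).add ((Real.hasDerivAt_sin s).smul_const _)
  have hFAt : FAt a t s = _ := ht.deriv
  have hFAs : FAs a t s = _ := hs.deriv
  rw [hFAt, hFAs]
  have h1a : (0:ℝ) ≤ 1 - a ^ 2 := by nlinarith
  set b := Real.sqrt (1 - a ^ 2) with hbdef
  set c := Real.sqrt 2 with hcdef
  have hb2 : b ^ 2 = 1 - a ^ 2 := Real.sq_sqrt h1a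
  have hc2 : c ^ 2 = 2 := Real.sq_sqrt (by norm_num)
  have hc0 : c ≠ 0 := by positivity
  have hsqrt : Real.sqrt (2 * (1 - a ^ 2)) = c * b := Real.sqrt_mul (by norm_num) _
  clear_value b c
  have h3t : Real.sin (3 * t) = Real.sin t * Real.cos (2 * t) + Real.cos t * Real.sin (2 * t) := by
    rw [show (3:ℝ) * t = t + 2 * t by ring, Real.sin_add]
  have key1 : (hermC2
      (Real.cos s • (((-Real.sin t : ℝ) : ℂ) + ((Real.cos t : ℝ) : ℂ) * ((a : ℂ) * Complex.I),
         ((Real.cos t : ℝ) : ℂ) * ((b : ℝ) : ℂ))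
       + Real.sin s • (((Real.cos (2 * t) * 2 / c : ℝ) : ℂ)
            * ((b : ℝ) : ℂ),
          ((-Real.sin (2 * t) * 2 / c : ℝ) : ℂ)
            + ((Real.cos (2 * t) * 2 / c : ℝ) : ℂ) * ((a : ℂ) * Complex.I)))
      (Real.cos s • (((-Real.sin t : ℝ) : ℂ) + ((Real.cos t : ℝ) : ℂ) * ((a : ℂ) * Complex.I),
         ((Real.cos t : ℝ) : ℂ) * ((b : ℝ) : ℂ))
       + Real.sin s • (((Real.cos (2 * t) * 2 / c : ℝ) : ℂ)
            * ((b : ℝ) : ℂ),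
          ((-Real.sin (2 * t) * 2 / c : ℝ) : ℂ)
            + ((Real.cos (2 * t) * 2 / c : ℝ) : ℂ) * ((a : ℂ) * Complex.I)))).re
      = Real.cos s ^ 2 + 2 * Real.sin s ^ 2
          - 2 * (c * b) * Real.cos s * Real.sin s * Real.sin (3 * t) := by
    simp only [hermC2, Prod.fst_add, Prod.snd_add, Prod.smul_fst, Prod.smul_snd,
      smul_eq_mul, Complex.real_smul, map_add, map_mul, Complex.conj_ofReal, Complex.conj_I,
      Complex.add_re, Complex.mul_re, Complex.mul_im, Complex.ofReal_re, Complex.ofReal_im,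
      Complex.I_re, Complex.I_im, Complex.add_im, Complex.neg_re, Complex.neg_im]
    rw [h3t]
    field_simp
    linear_combination (c^2 * Real.cos s^2) * Real.sin_sq_add_cos_sq t
      + (c^2 * Real.cos s^2 * Real.cos t^2 + 4 * Real.sin s^2 * Real.cos (2*t)^2) * hb2
      + 4 * Real.sin s^2 * Real.sin_sq_add_cos_sq (2*t)
      + (-2*Real.sin s^2 + 2*c*b*Real.cos s*Real.sin s*(Real.sin t*Real.cos (2*t)+Real.cos t*Real.sin (2*t))) * hc2
  refine ⟨by rw [hsqrt]; exact key1, ?_⟩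
  rw [key1, h3t]
  simp only [hermC2, alphaA, betaA, Prod.fst_add, Prod.snd_add, Prod.smul_fst, Prod.smul_snd,
    smul_eq_mul, Complex.real_smul, map_add, map_mul, Complex.conj_ofReal, Complex.conj_I,
    Complex.add_re, Complex.mul_re, Complex.mul_im, Complex.ofReal_re, Complex.ofReal_im,
    Complex.I_re, Complex.I_im, Complex.add_im, Complex.neg_re, Complex.neg_im]
  rw [← hbdef, ← hcdef]
  field_simp
  linear_combination (2*c^2*Real.sin s^2) * Real.sin_sq_add_cos_sq t
    + 2*Real.cos s^2 * Real.sin_sq_add_cos_sq (2*t)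
    + (2*c^2*Real.sin s^2*Real.sin t^2 + 2*Real.cos s^2*Real.sin (2*t)^2) * hb2
    + (-Real.cos s^2 + 2*c*b*Real.cos s*Real.sin s*(Real.sin t*Real.cos (2*t)+Real.cos t*Real.sin (2*t))) * hc2
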